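/- arXiv:2302.11331 — 6 statements merged into one kernel-verified Lean document; each statement's English description precedes it below -/
import Mathlib

section
/- For every squarefree positive integer n and every integer k ≥ 2, there exists a divisor d of n such that d ≤ n^{1/k} and τ(n) ≤ 2^k · τ(d)^k. -/
/-!
For squarefree `n` we have `τ(n) = 2 ^ ω(n)`, so it suffices to find a set `T` of prime factors
of `n` with `(∏ T) ^ k ≤ n` and `ω(n) ≤ k (|T| + 1)`. Peel off the prime factors `k` at a
time: from each block of `k` primes keep its least element `p`, so that `p ^ k` is at most the
product of the block; fewer than `k` primes are left over at the end.
-/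

open Finset

theorem Finset.exists_subset_prod_pow_le_prod {M : Type*} [CommMonoid M] [LinearOrder M]
    [IsOrderedMonoid M] {k : ℕ} (hk : 0 < k) (S : Finset M) (hS : ∀ x ∈ S, 1 ≤ x) :
    ∃ T ⊆ S, (∏ x ∈ T, x) ^ k ≤ ∏ x ∈ S, x ∧ #S ≤ k * (#T + 1) := by
  classical
  induction S using Finset.strongInduction with
  | H S ih =>
  by_cases hSk : #S < k
  · exact ⟨∅, empty_subset S, by simpa using one_le_prod' hS, by simpa using hSk.le⟩
  obtain ⟨A, hAS, hAk⟩ := exists_subset_card_eq (not_lt.mp hSk)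
  have hA : A.Nonempty := card_pos.mp (hAk ▸ hk)
  obtain ⟨T, hT, hTprod, hTcard⟩ :=
    ih (S \ A) (sdiff_ssubset hAS hA) fun x hx => hS x (mem_sdiff.mp hx).1
  have hpA : A.min' hA ∈ A := min'_mem A hA
  have hpT : A.min' hA ∉ T := fun h => (mem_sdiff.mp (hT h)).2 hpA
  have hpow : A.min' hA ^ k ≤ ∏ x ∈ A, x :=
    hAk ▸ pow_card_le_prod A id _ fun x hx => min'_le A x hx
  refine ⟨insert (A.min' hA) T, insert_subset (hAS hpA) (hT.trans sdiff_subset), ?_, ?_⟩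
  · calc (∏ x ∈ insert (A.min' hA) T, x) ^ k
          = A.min' hA ^ k * (∏ x ∈ T, x) ^ k := by rw [prod_insert hpT, mul_pow]
      _ ≤ (∏ x ∈ A, x) * ∏ x ∈ S \ A, x := mul_le_mul' hpow hTprod
      _ = ∏ x ∈ S, x := by rw [mul_comm, prod_sdiff hAS]
  · rw [card_insert_of_notMem hpT, ← card_sdiff_add_card_eq_card hAS, hAk]
    linarith

theorem Nat.card_divisors_of_squarefree {n : ℕ} (hn : Squarefree n) :
    #n.divisors = 2 ^ #n.primeFactors := by
  rw [Nat.card_divisors hn.ne_zero, ← prod_const]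
  exact prod_congr rfl fun p hp => by
    rw [Nat.factorization_eq_one_of_squarefree hn (Nat.prime_of_mem_primeFactors hp)
      (Nat.dvd_of_mem_primeFactors hp)]

theorem Real.le_rpow_one_div_of_pow_le {x y : ℝ} {k : ℕ} (hx : 0 ≤ x) (hy : 0 ≤ y)
    (hk : k ≠ 0) (h : x ^ k ≤ y) : x ≤ y ^ ((1 : ℝ) / k) := by
  rw [one_div, Real.le_rpow_inv_iff_of_pos hx hy (by positivity)]
  exact_mod_cast h

theorem stmt_1_general (n k : ℕ) (hsf : Squarefree n) (hk : 2 ≤ k) :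
    ∃ d : ℕ, d ∣ n ∧ (d : ℝ) ≤ (n : ℝ) ^ ((1 : ℝ) / k) ∧
      n.divisors.card ≤ 2 ^ k * d.divisors.card ^ k := by
  obtain ⟨T, hT, hTpow, hTcard⟩ :=
    n.primeFactors.exists_subset_prod_pow_le_prod (k := k) (by omega)
      fun p hp => (Nat.prime_of_mem_primeFactors hp).one_le
  rw [Nat.prod_primeFactors_of_squarefree hsf] at hTpow
  have hTprime : ∀ p ∈ T, p.Prime := fun p hp => Nat.prime_of_mem_primeFactors (hT hp)
  have hdvd : ∏ p ∈ T, p ∣ n :=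
    (prod_dvd_prod_of_subset _ _ (fun p => p) hT).trans
      (Nat.prod_primeFactors_of_squarefree hsf).dvd
  refine ⟨∏ p ∈ T, p, hdvd, Real.le_rpow_one_div_of_pow_le (by positivity) (by positivity)
    (by omega) (by exact_mod_cast hTpow), ?_⟩
  rw [Nat.card_divisors_of_squarefree hsf,
    Nat.card_divisors_of_squarefree (hsf.squarefree_of_dvd hdvd), Nat.primeFactors_prod hTprime,
    ← pow_mul, ← pow_add]
  exact Nat.pow_le_pow_right two_pos (by linarith)

/-- For every squarefree positive integer `n` and every integer `k ≥ 2`, there exists a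
divisor `d` of `n` such that `d ≤ n^(1/k)` and `τ(n) ≤ 2^k · τ(d)^k`. -/
theorem stmt_1 (n k : ℕ) (hn : 0 < n) (hsf : Squarefree n) (hk : 2 ≤ k) :
    ∃ d : ℕ, d ∣ n ∧ (d : ℝ) ≤ (n : ℝ) ^ ((1 : ℝ) / k) ∧
      n.divisors.card ≤ 2 ^ k * d.divisors.card ^ k :=
  stmt_1_general n k hsf hk
end

section
/- For every positive integer n and every integer k ≥ 2, there exists a divisor d of n such that d ≤ n^{1/k} and τ(n) ≤ 2^{k^2} · τ(d)^{k^3}. -/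
/-!
Let `a_p` be the exponent of `p` in `n` and `c = Nat.floorRoot k n = ∏ p ^ ⌊a_p / k⌋`. A prime with
`a_p ≥ k` contributes `a_p + 1 ≤ (⌊a_p / k⌋ + 1) ^ (k + 1)` to `τ(n)`, so all of these are paid for
by `τ(c) ^ (k + 1)`. Each of the `ω` primes with `a_p < k` contributes at most `k`, and
`k ^ ω ≤ 2 ^ (k²) · (2 ^ ⌊ω / k⌋) ^ (k³)`. Among `k` disjoint blocks of `⌊ω / k⌋` of these
primes, the block `T` with the smallest product has `(∏ T) ^ k ≤ P`, the product of all `ω` of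
them. Then `d = c · ∏ T` divides `c ^ k · P`, which divides `n`, so `d ^ k ≤ n`, and
`τ(d) = τ(c) · 2 ^ ⌊ω / k⌋`.
-/

open Finset

theorem Finset.exists_subset_card_eq_prod_pow_le {ι M : Type*} [CommMonoid M] [LinearOrder M]
    [IsOrderedMonoid M] {s : Finset ι} {f : ι → M} (hf : ∀ i ∈ s, 1 ≤ f i) {m j : ℕ}
    (hj : j ≠ 0) (hs : m * j ≤ #s) :
    ∃ t ⊆ s, #t = m ∧ (∏ i ∈ t, f i) ^ j ≤ ∏ i ∈ s, f i := by
  classical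
  obtain ⟨j, rfl⟩ := Nat.exists_eq_add_one_of_ne_zero hj
  induction j generalizing s with
  | zero =>
    obtain ⟨t, hts, htm⟩ := exists_subset_card_eq (show m ≤ #s by lia)
    exact ⟨t, hts, htm, by simpa using prod_le_prod_of_subset_of_one_le' hts fun i hi _ ↦ hf i hi⟩
  | succ j ih =>
    obtain ⟨t₀, ht₀s, ht₀m⟩ := exists_subset_card_eq (show m ≤ #s by nlinarith)
    obtain ⟨t, hts, htm, ht⟩ := ih (s := s \ t₀) (fun i hi ↦ hf i (mem_sdiff.1 hi).1)
      j.succ_ne_zero (by rw [card_sdiff_of_subset ht₀s]; lia)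
    -- whichever of `t`, `t₀` has the smaller product works, as `∏ s = ∏ (s \ t₀) * ∏ t₀`
    have key : ∀ u, ∏ i ∈ u, f i ≤ ∏ i ∈ t, f i → ∏ i ∈ u, f i ≤ ∏ i ∈ t₀, f i →
        (∏ i ∈ u, f i) ^ (j + 1 + 1) ≤ ∏ i ∈ s, f i := fun u hut hut₀ ↦
      calc (∏ i ∈ u, f i) ^ (j + 1 + 1) = (∏ i ∈ u, f i) ^ (j + 1) * ∏ i ∈ u, f i := pow_succ ..
        _ ≤ (∏ i ∈ s \ t₀, f i) * ∏ i ∈ t₀, f i :=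
          mul_le_mul' ((pow_le_pow_left' hut _).trans ht) hut₀
        _ = ∏ i ∈ s, f i := prod_sdiff ht₀s
    rcases le_total (∏ i ∈ t, f i) (∏ i ∈ t₀, f i) with h | h
    · exact ⟨t, hts.trans sdiff_subset, htm, key t le_rfl h⟩
    · exact ⟨t₀, ht₀s, ht₀m, key t₀ h le_rfl⟩

namespace Nat

theorem add_one_le_pow_div_add_one {a k : ℕ} (hk : 0 < k) (hka : k ≤ a) :
    a + 1 ≤ (a / k + 1) ^ (k + 1) :=
  calc a + 1 ≤ k * (a / k + 1) := lt_mul_div_succ a hk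
    _ ≤ 2 ^ k * (a / k + 1) := Nat.mul_le_mul_right _ k.lt_two_pow_self.le
    _ ≤ (a / k + 1) ^ k * (a / k + 1) :=
      Nat.mul_le_mul_right _ (Nat.pow_le_pow_left (by have := Nat.div_pos hka hk; lia) k)
    _ = (a / k + 1) ^ (k + 1) := (pow_succ ..).symm

theorem pow_le_two_pow_sq_mul_two_pow_div_pow_cube {k : ℕ} (hk : 0 < k) (w : ℕ) :
    k ^ w ≤ 2 ^ (k ^ 2) * (2 ^ (w / k)) ^ (k ^ 3) := by
  have hw : k * w ≤ k ^ 2 + w / k * k ^ 3 := by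
    have h1 : w < k * (w / k + 1) := lt_mul_div_succ w hk
    have h2 : k ^ 2 ≤ k ^ 3 := Nat.pow_le_pow_right hk (by lia)
    calc k * w ≤ k * (k * (w / k + 1)) := Nat.mul_le_mul_left k h1.le
      _ = k ^ 2 * (w / k) + k ^ 2 := by ring
      _ ≤ k ^ 3 * (w / k) + k ^ 2 := by gcongr
      _ = k ^ 2 + w / k * k ^ 3 := by ring
  calc k ^ w ≤ (2 ^ k) ^ w := Nat.pow_le_pow_left k.lt_two_pow_self.le w
    _ = 2 ^ (k * w) := (pow_mul ..).symm
    _ ≤ 2 ^ (k ^ 2 + w / k * k ^ 3) := Nat.pow_le_pow_right two_pos hw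
    _ = 2 ^ (k ^ 2) * (2 ^ (w / k)) ^ (k ^ 3) := by rw [pow_add, pow_mul]

theorem card_divisors_prod_primes {s : Finset ℕ} (hs : ∀ p ∈ s, p.Prime) :
    #(∏ p ∈ s, p).divisors = 2 ^ #s := by
  rw [← ArithmeticFunction.sigma_zero_apply,
    ArithmeticFunction.isMultiplicative_sigma.map_prod_of_prime s hs]
  exact prod_eq_pow_card fun p hp ↦ by
    rw [← pow_one p, ArithmeticFunction.sigma_zero_apply_prime_pow (hs p hp)]

variable {n k : ℕ}

def lowPrimeFactors (n k : ℕ) : Finset ℕ := {p ∈ n.primeFactors | n.factorization p < k}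

theorem card_divisors_floorRoot (hk : k ≠ 0) (hn : n ≠ 0) :
    #(floorRoot k n).divisors = ∏ p ∈ n.primeFactors, (n.factorization p / k + 1) := by
  rw [card_divisors (floorRoot_ne_zero.2 ⟨hk, hn⟩), ← support_factorization,
    ← support_factorization, factorization_floorRoot]
  exact prod_subset Finsupp.support_floorDiv_subset fun p _ hp ↦ by simp_all

theorem card_divisors_le_pow_mul_card_divisors_floorRoot_pow (hk : 0 < k) (hn : n ≠ 0) :
    #n.divisors ≤ k ^ #(n.lowPrimeFactors k) * #(floorRoot k n).divisors ^ (k + 1) := by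
  have hkL : k ^ #(n.lowPrimeFactors k) =
      ∏ p ∈ n.primeFactors, if n.factorization p < k then k else 1 := by
    rw [lowPrimeFactors, ← prod_filter, prod_const]
  rw [card_divisors hn, card_divisors_floorRoot hk.ne' hn, hkL, ← prod_pow, ← prod_mul_distrib]
  refine prod_le_prod' fun p _ ↦ ?_
  split_ifs with h
  · rw [Nat.div_eq_of_lt h, zero_add, one_pow, mul_one]
    exact h
  · rw [one_mul]
    exact add_one_le_pow_div_add_one hk (not_lt.1 h)

theorem coprime_floorRoot_prod_lowPrimeFactors :
    (floorRoot k n).Coprime (∏ p ∈ n.lowPrimeFactors k, p) := by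
  refine Coprime.prod_right fun p hp ↦ ?_
  obtain ⟨hpn, hlt⟩ := mem_filter.1 hp
  obtain ⟨hp, -, hn⟩ := mem_primeFactors.1 hpn
  have hc : floorRoot k n ≠ 0 := floorRoot_ne_zero.2 ⟨by lia, hn⟩
  rw [coprime_comm, hp.coprime_iff_not_dvd, hp.dvd_iff_one_le_factorization hc]
  simp [Nat.div_eq_of_lt hlt]

theorem floorRoot_pow_mul_prod_lowPrimeFactors_dvd :
    floorRoot k n ^ k * ∏ p ∈ n.lowPrimeFactors k, p ∣ n :=
  (coprime_floorRoot_prod_lowPrimeFactors.pow_left k).mul_dvd_of_dvd_of_dvd floorRoot_pow_dvd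
    ((prod_dvd_prod_of_subset _ _ _ (filter_subset _ _)).trans (prod_primeFactors_dvd n))

theorem exists_dvd_pow_le_card_divisors_le (hn : n ≠ 0) (hk : 2 ≤ k) :
    ∃ d, d ∣ n ∧ d ^ k ≤ n ∧ #n.divisors ≤ 2 ^ (k ^ 2) * #d.divisors ^ (k ^ 3) := by
  set c := floorRoot k n
  set L := n.lowPrimeFactors k
  have hL : ∀ p ∈ L, p.Prime := fun p hp ↦ prime_of_mem_primeFactors (mem_filter.1 hp).1
  obtain ⟨T, hTL, hTcard, hTprod⟩ := L.exists_subset_card_eq_prod_pow_le (f := id)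
    (fun p hp ↦ (hL p hp).one_le) (m := #L / k) (by lia) (Nat.div_mul_le_self _ _)
  have hTL' : ∏ p ∈ T, p ∣ ∏ p ∈ L, p := prod_dvd_prod_of_subset _ _ _ hTL
  have hD : c ^ k * ∏ p ∈ L, p ∣ n := floorRoot_pow_mul_prod_lowPrimeFactors_dvd
  refine ⟨c * ∏ p ∈ T, p, (mul_dvd_mul (dvd_pow_self c (by lia)) hTL').trans hD, ?_, ?_⟩
  · calc (c * ∏ p ∈ T, p) ^ k = c ^ k * (∏ p ∈ T, p) ^ k := mul_pow ..
      _ ≤ c ^ k * ∏ p ∈ L, p := Nat.mul_le_mul_left _ hTprod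
      _ ≤ n := le_of_dvd (pos_of_ne_zero hn) hD
  · have hc : 0 < #c.divisors := Finset.card_pos.2 (nonempty_divisors.2 (floorRoot_ne_zero.2 ⟨by lia, hn⟩))
    rw [(coprime_floorRoot_prod_lowPrimeFactors.coprime_dvd_right hTL').card_divisors_mul,
      card_divisors_prod_primes fun p hp ↦ hL p (hTL hp), hTcard]
    calc #n.divisors ≤ k ^ #L * #c.divisors ^ (k + 1) :=
          card_divisors_le_pow_mul_card_divisors_floorRoot_pow (by lia) hn
      _ ≤ 2 ^ (k ^ 2) * (2 ^ (#L / k)) ^ (k ^ 3) * #c.divisors ^ (k ^ 3) :=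
          Nat.mul_le_mul (pow_le_two_pow_sq_mul_two_pow_div_pow_cube (by lia) _)
            (Nat.pow_le_pow_right hc (by nlinarith [Nat.mul_le_mul hk hk]))
      _ = 2 ^ (k ^ 2) * (#c.divisors * 2 ^ (#L / k)) ^ (k ^ 3) := by ring

end Nat

/-- For every positive integer `n` and every integer `k ≥ 2`, there exists a divisor `d`
of `n` such that `d ≤ n^(1/k)` and `τ(n) ≤ 2^(k²) · τ(d)^(k³)`. -/
theorem stmt_2 (n k : ℕ) (hn : 0 < n) (hk : 2 ≤ k) :
    ∃ d : ℕ, d ∣ n ∧ (d : ℝ) ≤ (n : ℝ) ^ ((1 : ℝ) / k) ∧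
      n.divisors.card ≤ 2 ^ (k ^ 2) * d.divisors.card ^ (k ^ 3) := by
  obtain ⟨d, hdvd, hdk, hτ⟩ := Nat.exists_dvd_pow_le_card_divisors_le hn.ne' hk
  refine ⟨d, hdvd, ?_, hτ⟩
  rw [one_div, Real.le_rpow_inv_iff_of_pos (by positivity) (by positivity) (by positivity),
    Real.rpow_natCast]
  exact_mod_cast hdk
end

section
/- For any positive integer d and any integer a, the absolute value of the sum of χ(a) over all primitive Dirichlet characters χ modulo d is at most gcd(a−1, d). -/
/-!
For `a` coprime to `n`, every character mod `n` is induced by exactly one primitive character,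
of level dividing `n`, so `∑_{e ∣ n} ∑_{ψ primitive mod e} ψ(a) = ∑_{χ mod n} χ(a)`.
Möbius inversion over the divisors of `d` expresses the sum over primitive characters as
`∑_{ke = d} μ(k) ∑_{χ mod e} χ(a)`; by orthogonality the inner sum is `φ(e)` when `e ∣ a - 1` and
`0` otherwise, so the norm is at most `∑_{e ∣ gcd(a - 1, d)} φ(e) = gcd(a - 1, d)`.
If `a` is not coprime to `d`, every term vanishes.
-/

open scoped Classical

open Finset ArithmeticFunction
open scoped ArithmeticFunction.Moebius

theorem Nat.filter_divisors_intCast_eq_one {d : ℕ} (hd : d ≠ 0) (a : ℤ) :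
    {e ∈ d.divisors | (a : ZMod e) = 1} = (Int.gcd (a - 1) d).divisors := by
  have hgcd : Int.gcd (a - 1) d ≠ 0 := by simp [Int.gcd_eq_zero_iff, hd]
  ext e
  rw [mem_filter, Nat.mem_divisors, Nat.mem_divisors, ← Int.cast_one,
    ZMod.intCast_eq_intCast_iff_dvd_sub, dvd_sub_comm, Int.gcd_eq_natAbs_gcd_natAbs,
    Nat.dvd_gcd_iff, Int.natCast_dvd, Int.natAbs_natCast]
  tauto

namespace DirichletCharacter

variable {R : Type*} [CommRing R] [IsDomain R]

theorem sum_divisors_sum_isPrimitive_apply {n : ℕ} [NeZero n] {a : ℤ} (ha : IsCoprime a n) :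
    ∑ e ∈ n.divisors, ∑ ψ ∈ univ.filter (fun ψ : DirichletCharacter R e => ψ.IsPrimitive), ψ a
      = ∑ χ : DirichletCharacter R n, χ a := by
  rw [sum_sigma']
  refine sum_bij (fun p hp ↦ changeLevel (Nat.dvd_of_mem_divisors (mem_sigma.mp hp).1) p.2)
    (fun _ _ ↦ mem_univ _) ?_ ?_ ?_
  · rintro ⟨e, ψ⟩ hψ ⟨e', ψ'⟩ hψ' (h : changeLevel _ ψ = changeLevel _ ψ')
    simp only [mem_sigma, mem_filter, Nat.mem_divisors] at hψ hψ'
    obtain rfl : e = e' := by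
      rw [← hψ.2.2, ← hψ'.2.2, ← conductor_changeLevel ψ hψ.1.1,
        ← conductor_changeLevel ψ' hψ'.1.1, h]
    rw [changeLevel_injective _ h]
  · intro χ _
    refine ⟨⟨χ.conductor, χ.primitiveCharacter⟩, ?_, changeLevel_primitiveCharacter χ⟩
    simp [χ.conductor_dvd_level, NeZero.ne n, primitiveCharacter_isPrimitive]
  · rintro ⟨e, ψ⟩ _
    exact (changeLevel_eq_cast_of_dvd' ψ _ ha).symm

theorem sum_isPrimitive_apply_eq_sum_moebius {d : ℕ} (hd : 0 < d) {a : ℤ} (ha : IsCoprime a d) :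
    ∑ χ ∈ univ.filter (fun χ : DirichletCharacter R d => χ.IsPrimitive), χ a =
      ∑ x ∈ d.divisorsAntidiagonal, (μ x.1 : R) * ∑ χ : DirichletCharacter R x.2, χ a := by
  refine ((sum_eq_iff_sum_mul_moebius_eq_on
    (f := fun e ↦ ∑ ψ ∈ univ.filter (fun ψ : DirichletCharacter R e => ψ.IsPrimitive), ψ a)
    (g := fun n ↦ ∑ χ : DirichletCharacter R n, χ a) {m : ℕ | IsCoprime a m}
    fun m n hmn hn ↦ hn.of_isCoprime_of_dvd_right (Int.natCast_dvd_natCast.mpr hmn)).mp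
      ?_ d hd ha).symm
  intro n hn han
  have : NeZero n := ⟨hn.ne'⟩
  exact sum_divisors_sum_isPrimitive_apply han

theorem norm_sum_characters_eq {n : ℕ} [NeZero n] (a : ZMod n) :
    ‖∑ χ : DirichletCharacter ℂ n, χ a‖ = if a = 1 then (n.totient : ℝ) else 0 := by
  rw [sum_characters_eq]
  split_ifs <;> simp

theorem norm_sum_isPrimitive_apply_le_gcd {d : ℕ} (hd : 0 < d) {a : ℤ} (ha : IsCoprime a d) :
    ‖∑ χ ∈ univ.filter (fun χ : DirichletCharacter ℂ d => χ.IsPrimitive), χ a‖ ≤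
      Int.gcd (a - 1) d := by
  calc ‖∑ χ ∈ univ.filter (fun χ : DirichletCharacter ℂ d => χ.IsPrimitive), χ a‖
      ≤ ∑ x ∈ d.divisorsAntidiagonal, ‖∑ χ : DirichletCharacter ℂ x.2, χ a‖ := by
        rw [sum_isPrimitive_apply_eq_sum_moebius hd ha]
        refine norm_sum_le_of_le _ fun x _ ↦ ?_
        rw [norm_mul]
        refine mul_le_of_le_one_left (norm_nonneg _) ?_
        rw [Complex.norm_intCast]
        exact_mod_cast abs_moebius_le_one
    _ = ∑ e ∈ d.divisors, if (a : ZMod e) = 1 then (e.totient : ℝ) else 0 := by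
        rw [Nat.sum_divisorsAntidiagonal' (fun _ e ↦ ‖∑ χ : DirichletCharacter ℂ e, χ a‖)]
        refine sum_congr rfl fun e he ↦ ?_
        have : NeZero e := ⟨Nat.ne_of_gt (Nat.pos_of_mem_divisors he)⟩
        exact norm_sum_characters_eq (a : ZMod e)
    _ = Int.gcd (a - 1) d := by
        rw [← sum_filter, Nat.filter_divisors_intCast_eq_one hd.ne', ← Nat.cast_sum,
          Nat.sum_totient]

end DirichletCharacter

/-- For any positive integer `d` and any integer `a`, the absolute value of the sum of
`χ(a)` over all primitive Dirichlet characters `χ` modulo `d` is at most `gcd(a - 1, d)`. -/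
theorem stmt_3 (d : ℕ) (hd : 0 < d) (a : ℤ) :
    ‖∑ χ ∈ Finset.univ.filter (fun χ : DirichletCharacter ℂ d => χ.IsPrimitive),
        χ (a : ZMod d)‖ ≤ (Int.gcd (a - 1) d : ℝ) := by
  by_cases ha : IsCoprime a d
  · exact DirichletCharacter.norm_sum_isPrimitive_apply_le_gcd hd ha
  · simp [(DirichletCharacter.apply_eq_zero_iff _ a).mpr ha]
end

section
/- Every odd ideal of the Gaussian integers ℤ[i] (i.e., an ideal coprime to (1+i)) has a unique generator z satisfying z ≡ 1 (mod 2(1+i)); such a z is called primary. Moreover the primary condition is multiplicative: if z and w are primary then zw is primary. -/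
/-!
Write `π = 1 + i`. Units of `ℤ[i]/(2π)`, a ring of order `8`, are the classes of elements prime
to `π`, i.e. with `re + im` odd; there are four of them, and the four units `±1, ±i` of `ℤ[i]`
fall into distinct classes. Hence every odd generator has exactly one unit multiple that is
`≡ 1 (mod 2π)`. Uniqueness uses that a primary `z` is coprime to `2π`, so `2π ∣ (u - 1) z`
forces `2π ∣ u - 1`, and among the units only `u = 1` satisfies this.
-/

theorem isCoprime_of_dvd_sub_one {R : Type*} [CommRing R] {a z : R} (h : a ∣ z - 1) :
    IsCoprime a z := by
  obtain ⟨k, hk⟩ := h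
  exact ⟨-k, 1, by linear_combination hk⟩

namespace GaussianInt

def IsPrimary (z : GaussianInt) : Prop :=
  (2 * ⟨1, 1⟩ : GaussianInt) ∣ z - 1

theorem two_mul_one_add_i_dvd_iff (w : GaussianInt) :
    (2 * ⟨1, 1⟩ : GaussianInt) ∣ w ↔ 4 ∣ w.re + w.im ∧ 4 ∣ w.im - w.re := by
  have h22 : (2 * ⟨1, 1⟩ : GaussianInt) = ⟨2, 2⟩ := by ext <;> simp
  rw [h22]
  constructor
  · rintro ⟨k, rfl⟩
    simp only [Zsqrtd.re_mul, Zsqrtd.im_mul]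
    omega
  · rintro ⟨h1, h2⟩
    refine ⟨⟨(w.re + w.im) / 4, (w.im - w.re) / 4⟩, ?_⟩
    ext <;> simp only [Zsqrtd.re_mul, Zsqrtd.im_mul] <;> omega

theorem isPrimary_iff (z : GaussianInt) :
    IsPrimary z ↔ 4 ∣ z.re + z.im - 1 ∧ 4 ∣ z.im - z.re + 1 := by
  rw [IsPrimary, two_mul_one_add_i_dvd_iff]
  simp only [Zsqrtd.re_sub, Zsqrtd.im_sub, Zsqrtd.re_one, Zsqrtd.im_one]
  constructor <;> rintro ⟨h1, h2⟩ <;> constructor <;> omega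

theorem one_add_i_dvd_iff (w : GaussianInt) : (⟨1, 1⟩ : GaussianInt) ∣ w ↔ 2 ∣ w.re + w.im := by
  constructor
  · rintro ⟨k, rfl⟩
    simp only [Zsqrtd.re_mul, Zsqrtd.im_mul]
    omega
  · rintro ⟨t, ht⟩
    refine ⟨⟨t, w.im - t⟩, ?_⟩
    ext <;> simp only [Zsqrtd.re_mul, Zsqrtd.im_mul] <;> omega

theorem not_isUnit_one_add_i : ¬ IsUnit (⟨1, 1⟩ : GaussianInt) := by
  rw [← Zsqrtd.norm_eq_one_iff' (by norm_num)]
  decide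

theorem IsPrimary.mul {z w : GaussianInt} (hz : IsPrimary z) (hw : IsPrimary w) :
    IsPrimary (z * w) := by
  have : z * w - 1 = z * (w - 1) + (z - 1) := by ring
  rw [IsPrimary, this]
  exact dvd_add (hw.mul_left z) hz

theorem exists_isUnit_mul_isPrimary {g : GaussianInt} (hg : ¬ (⟨1, 1⟩ : GaussianInt) ∣ g) :
    ∃ u : GaussianInt, IsUnit u ∧ IsPrimary (u * g) := by
  rw [one_add_i_dvd_iff] at hg
  have hi : IsUnit (⟨0, 1⟩ : GaussianInt) := (Zsqrtd.norm_eq_one_iff' (by norm_num) _).1 rfl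
  have hcases : IsPrimary g ∨ IsPrimary (-g) ∨ IsPrimary (⟨0, 1⟩ * g) ∨
      IsPrimary (-⟨0, 1⟩ * g) := by
    simp only [isPrimary_iff, Zsqrtd.re_mul, Zsqrtd.im_mul, Zsqrtd.re_neg, Zsqrtd.im_neg]
    omega
  rcases hcases with h | h | h | h
  · exact ⟨1, isUnit_one, by rwa [one_mul]⟩
  · exact ⟨-1, isUnit_one.neg, by rwa [neg_one_mul]⟩
  · exact ⟨_, hi, h⟩
  · exact ⟨_, hi.neg, h⟩

theorem eq_one_of_isUnit_of_isPrimary {u : GaussianInt} (hu : IsUnit u) (h : IsPrimary u) :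
    u = 1 := by
  have hnorm : u.re * u.re + u.im * u.im = 1 := by
    rw [← Zsqrtd.norm_eq_one_iff' (by norm_num), Zsqrtd.norm_def] at hu
    linarith
  have hre : -1 ≤ u.re ∧ u.re ≤ 1 := by constructor <;> nlinarith
  have him : -1 ≤ u.im ∧ u.im ≤ 1 := by constructor <;> nlinarith
  rw [isPrimary_iff] at h
  ext <;> simp only [Zsqrtd.re_one, Zsqrtd.im_one] <;> omega

theorem IsPrimary.eq_of_associated {z w : GaussianInt} (hz : IsPrimary z) (hw : IsPrimary w)
    (hzw : Associated z w) : z = w := by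
  obtain ⟨u, rfl⟩ := hzw
  have hdvd : (2 * ⟨1, 1⟩ : GaussianInt) ∣ (u - 1) * z := by
    have := dvd_sub hw hz
    rwa [show z * u - 1 - (z - 1) = (↑u - 1) * z by ring] at this
  have hu : IsPrimary u := (isCoprime_of_dvd_sub_one hz).dvd_of_dvd_mul_right hdvd
  rw [eq_one_of_isUnit_of_isPrimary u.isUnit hu, mul_one]

end GaussianInt

/-- Every odd ideal of the Gaussian integers `ℤ[i]` (i.e., an ideal coprime to `(1+i)`)
has a unique generator `z` satisfying `z ≡ 1 (mod 2(1+i))`; such a `z` is called primary.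
Moreover the primary condition is multiplicative: if `z` and `w` are primary then `z*w`
is primary. -/
theorem stmt_5 :
    (∀ I : Ideal GaussianInt, I ⊔ Ideal.span {(⟨1, 1⟩ : GaussianInt)} = ⊤ →
      ∃! z : GaussianInt, Ideal.span {z} = I ∧ (2 * ⟨1, 1⟩ : GaussianInt) ∣ (z - 1)) ∧
    (∀ z w : GaussianInt, (2 * ⟨1, 1⟩ : GaussianInt) ∣ (z - 1) →
      (2 * ⟨1, 1⟩ : GaussianInt) ∣ (w - 1) → (2 * ⟨1, 1⟩ : GaussianInt) ∣ (z * w - 1)) := by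
  refine ⟨fun I hI => ?_, fun z w hz hw => GaussianInt.IsPrimary.mul hz hw⟩
  obtain ⟨g, rfl⟩ : ∃ g, I = Ideal.span {g} := (IsPrincipalIdealRing.principal I).1
  have hodd : ¬ (⟨1, 1⟩ : GaussianInt) ∣ g := fun hdvd => GaussianInt.not_isUnit_one_add_i <|
    (Ideal.isCoprime_span_singleton_iff _ _).1 ((Ideal.isCoprime_iff_sup_eq).2 hI)
      |>.isUnit_of_dvd' hdvd dvd_rfl
  obtain ⟨u, hu, hprim⟩ := GaussianInt.exists_isUnit_mul_isPrimary hodd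
  have hspan : Ideal.span {u * g} = Ideal.span {g} :=
    Ideal.span_singleton_eq_span_singleton.2 ((associated_isUnit_mul_left_iff hu).2 .rfl)
  refine ⟨u * g, ⟨hspan, hprim⟩, fun z ⟨hz, hzprim⟩ => ?_⟩
  exact GaussianInt.IsPrimary.eq_of_associated hzprim hprim
    (Ideal.span_singleton_eq_span_singleton.1 (hz.trans hspan.symm))
end

section
/- Let z₁, z₂ ∈ ℤ[i] with gcd(z₁, conj(z₁)) = 1 and gcd(z₂, conj(z₂)) = 1 and gcd(z₁, z₂) = 1. Set Δ = Im(conj(z₁)·z₂). Then Δ is coprime (as a rational integer) to |z₁|²·|z₂|². -/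
/-!
With `w = star z₁ * z₂ - z₁ * star z₂ = 2 Δ √-1`, the element `z₁` is coprime to `star z₁ * z₂`,
hence to `w`; `star z₁`, `z₂`, `star z₂` are coprime to `w` by conjugating and swapping the
roles, since both operations only change the sign of `w`. So `|z₁|²|z₂|²` is coprime to `w`,
hence to `Δ`, in `ℤ[i]`, and coprimality of rational integers descends from `ℤ[i]` to `ℤ` by
taking real parts of a Bézout identity.
-/

section StarRing

variable {R : Type*} [CommRing R] [StarRing R] {x y : R}

theorem IsCoprime.star (h : IsCoprime x y) : IsCoprime (star x) (star y) :=
  h.map (starRingEnd R)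

theorem star_star_mul_sub_mul_star (x y : R) :
    star (star x * y - x * star y) = -(star x * y - x * star y) := by
  simp only [star_sub, star_mul, star_star]
  ring

theorem isCoprime_star_mul_sub_mul_star (hx : IsCoprime x (star x)) (hxy : IsCoprime x y) :
    IsCoprime x (star x * y - x * star y) :=
  IsCoprime.sub_mul_left_right_iff.mpr (hx.mul_right hxy)

theorem isCoprime_mul_star_mul_mul_star_star_mul_sub_mul_star
    (hx : IsCoprime x (star x)) (hy : IsCoprime y (star y)) (hxy : IsCoprime x y) :
    IsCoprime (x * star x * (y * star y)) (star x * y - x * star y) := by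
  have hx' := isCoprime_star_mul_sub_mul_star hx hxy
  have hy' : IsCoprime y (star x * y - x * star y) := by
    have := (isCoprime_star_mul_sub_mul_star hy hxy.symm).neg_right
    rwa [show -(star y * x - y * star x) = star x * y - x * star y by ring] at this
  have conj_left {z : R} (hz : IsCoprime z (star x * y - x * star y)) :
      IsCoprime (star z) (star x * y - x * star y) := by
    simpa only [star_star_mul_sub_mul_star, IsCoprime.neg_right_iff] using hz.star
  exact (hx'.mul_left (conj_left hx')).mul_left (hy'.mul_left (conj_left hy'))

end StarRing

namespace Zsqrtd

variable {d : ℤ}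

theorem sub_star (z : ℤ√d) : z - star z = 2 * (z.im : ℤ√d) * sqrtd := by
  ext <;> simp [re_mul, im_mul]; ring

theorem isCoprime_intCast_iff {a b : ℤ} : IsCoprime (a : ℤ√d) b ↔ IsCoprime a b := by
  refine ⟨fun ⟨u, v, h⟩ => ⟨u.re, v.re, ?_⟩, fun h => h.intCast⟩
  simpa using congrArg re h

end Zsqrtd

/-- Let `z₁, z₂ ∈ ℤ[i]` with `gcd(z₁, conj z₁) = 1`, `gcd(z₂, conj z₂) = 1` and
`gcd(z₁, z₂) = 1`. Set `Δ = Im(conj(z₁)·z₂)`. Then `Δ` is coprime (as a rational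
integer) to `|z₁|²·|z₂|²`. -/
theorem stmt_6 (z₁ z₂ : GaussianInt)
    (h₁ : IsCoprime z₁ (star z₁)) (h₂ : IsCoprime z₂ (star z₂))
    (h₁₂ : IsCoprime z₁ z₂) :
    Int.gcd ((star z₁ * z₂).im) (z₁.norm * z₂.norm) = 1 := by
  have h := isCoprime_mul_star_mul_mul_star_star_mul_sub_mul_star h₁ h₂ h₁₂
  have twice_im : star z₁ * z₂ - z₁ * star z₂ = 2 * ((star z₁ * z₂).im : GaussianInt) * Zsqrtd.sqrtd := by
    rw [← Zsqrtd.sub_star, star_mul, star_star, mul_comm (star z₂)]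
  rw [twice_im, ← Zsqrtd.norm_eq_mul_conj, ← Zsqrtd.norm_eq_mul_conj, ← Int.cast_mul] at h
  exact Int.isCoprime_iff_gcd_eq_one.mp
    (Zsqrtd.isCoprime_intCast_iff.mp h.of_mul_right_left.of_mul_right_right).symm
end

section
/- Let w, z₁, z₂ ∈ ℤ[i] with gcd(w, conj(w)) = 1, and set b₁ = Re(conj(w)z₁), b₂ = Re(conj(w)z₂), Δ = Im(conj(z₁)z₂), and b₀ = gcd(b₁, b₂) (in ℤ). Then b₀ divides Δ. -/
/-!
Write `bₖ = Re(w̄ zₖ)` and `Δ = Im(z̄₁ z₂)`. Expanding coordinates gives `b₁ z₂ - b₂ z₁ = Δ w √d`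
in any `ℤ√d`, so the rational integer `b₀ = gcd(b₁, b₂)` divides `Δ w` in `ℤ[i]`, where `√-1 = i`
is a unit. Conjugating, it also divides `Δ w̄`, and a Bézout relation `u w + v w̄ = 1` then gives
`b₀ ∣ Δ` in `ℤ[i]`, hence in `ℤ`.
-/

theorem Zsqrtd.re_star_mul_mul_sub_re_star_mul_mul {d : ℤ} (w z₁ z₂ : ℤ√d) :
    ((star w * z₁).re : ℤ√d) * z₂ - ((star w * z₂).re : ℤ√d) * z₁
      = ((star z₁ * z₂).im : ℤ√d) * w * Zsqrtd.sqrtd := by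
  ext <;> simp only [Zsqrtd.re_sub, Zsqrtd.im_sub, Zsqrtd.re_mul, Zsqrtd.im_mul, Zsqrtd.re_star,
    Zsqrtd.im_star, Zsqrtd.re_intCast, Zsqrtd.im_intCast, Zsqrtd.re_sqrtd, Zsqrtd.im_sqrtd] <;> ring

theorem isUnit_sqrtd_neg_one : IsUnit (Zsqrtd.sqrtd : ℤ√(-1)) :=
  Zsqrtd.norm_eq_one_iff.mp rfl

theorem IsSelfAdjoint.dvd_of_dvd_mul_of_isCoprime_star {R : Type*} [CommSemiring R] [StarRing R]
    {b x w : R} (hb : IsSelfAdjoint b) (hx : IsSelfAdjoint x) (hw : IsCoprime w (star w))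
    (h : b ∣ x * w) : b ∣ x := by
  have h_star : b ∣ x * star w := by
    simpa only [starRingEnd_apply, star_mul', hb.star_eq, hx.star_eq]
      using map_dvd (starRingEnd R) h
  obtain ⟨u, v, huv⟩ := hw
  have hx_eq : x = u * (x * w) + v * (x * star w) := by
    rw [mul_left_comm, mul_left_comm v, ← mul_add, huv, mul_one]
  rw [hx_eq]
  exact dvd_add (h.mul_left u) (h_star.mul_left v)

/-- Let `w, z₁, z₂ ∈ ℤ[i]` with `gcd(w, conj w) = 1`, and set `b₁ = Re(conj(w)z₁)`,
`b₂ = Re(conj(w)z₂)`, `Δ = Im(conj(z₁)z₂)`, and `b₀ = gcd(b₁, b₂)` (in `ℤ`).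
Then `b₀` divides `Δ`. -/
theorem stmt_8 (w z₁ z₂ : GaussianInt) (hw : IsCoprime w (star w)) :
    (Int.gcd ((star w * z₁).re) ((star w * z₂).re) : ℤ) ∣ (star z₁ * z₂).im := by
  set b₀ : ℤ := (Int.gcd ((star w * z₁).re) ((star w * z₂).re) : ℤ)
  have h_cast : ∀ {m n : ℤ}, m ∣ n → (m : GaussianInt) ∣ n := Int.cast_dvd_cast _ _
  have h_dvd : (b₀ : GaussianInt) ∣ ((star z₁ * z₂).im : GaussianInt) * w := by
    rw [← isUnit_sqrtd_neg_one.dvd_mul_right, ← Zsqrtd.re_star_mul_mul_sub_re_star_mul_mul]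
    exact dvd_sub ((h_cast (Int.gcd_dvd_left _ _)).mul_right _)
      ((h_cast (Int.gcd_dvd_right _ _)).mul_right _)
  exact (Zsqrtd.intCast_dvd_intCast _ _).1 <|
    (IsSelfAdjoint.intCast b₀).dvd_of_dvd_mul_of_isCoprime_star (IsSelfAdjoint.intCast _) hw h_dvd
end
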